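/- arXiv:0809.5150 — 7 statements merged into one kernel-verified Lean document; each statement's English description precedes it below -/
import Mathlib

section
/- For every pair (x, y) ∈ IR × IR, exactly one of the following holds: (i) there is a unique A = (a₁, a₂) ∈ IR with a₁ < a₂ such that (x, y) ~ (A, (0,0)); (ii) there is a unique A = (a₁, a₂) ∈ IR with a₁ < a₂ such that (x, y) ~ ((0,0), A); (iii) there is a unique α ∈ ℝ such that (x, y) ~ ((α, α), (0,0)). -/
/-- An interval `[a, b]` is identified with the pair `(a, b)` with `a ≤ b`. -/
def IsInterval (p : ℝ × ℝ) : Prop := p.1 ≤ p.2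

/-- The equivalence relation on pairs of intervals used to symmetrize the monoid `IR`:
`(x, y) ~ (z, t) ↔ x + t = y + z`. -/
def grel (p q : (ℝ × ℝ) × (ℝ × ℝ)) : Prop := p.1 + q.2 = p.2 + q.1

/-- For every pair `(x, y)` of intervals, exactly one of the following holds:
(i) there is a unique interval `A` with `A.1 < A.2` such that `(x, y) ~ (A, 0)`;
(ii) there is a unique interval `A` with `A.1 < A.2` such that `(x, y) ~ (0, A)`;
(iii) there is a unique real `α` such that `(x, y) ~ ((α, α), 0)`. -/
theorem stmt1 (x y : ℝ × ℝ) (hx : IsInterval x) (hy : IsInterval y) :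
    ((∃! A : ℝ × ℝ, A.1 < A.2 ∧ grel (x, y) (A, 0)) ∧
      ¬ (∃! A : ℝ × ℝ, A.1 < A.2 ∧ grel (x, y) (0, A)) ∧
      ¬ (∃! α : ℝ, grel (x, y) ((α, α), 0))) ∨
    (¬ (∃! A : ℝ × ℝ, A.1 < A.2 ∧ grel (x, y) (A, 0)) ∧
      (∃! A : ℝ × ℝ, A.1 < A.2 ∧ grel (x, y) (0, A)) ∧
      ¬ (∃! α : ℝ, grel (x, y) ((α, α), 0))) ∨
    (¬ (∃! A : ℝ × ℝ, A.1 < A.2 ∧ grel (x, y) (A, 0)) ∧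
      ¬ (∃! A : ℝ × ℝ, A.1 < A.2 ∧ grel (x, y) (0, A)) ∧
      (∃! α : ℝ, grel (x, y) ((α, α), 0))) := by
  have key1 : ∀ A : ℝ × ℝ, grel (x, y) (A, 0) ↔ A = (x.1 - y.1, x.2 - y.2) := by
    intro A
    simp only [grel, Prod.ext_iff, Prod.fst_add, Prod.snd_add, Prod.fst_zero, Prod.snd_zero]
    constructor <;> rintro ⟨h1, h2⟩ <;> constructor <;> linarith
  have key2 : ∀ A : ℝ × ℝ, grel (x, y) (0, A) ↔ A = (y.1 - x.1, y.2 - x.2) := by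
    intro A
    simp only [grel, Prod.ext_iff, Prod.fst_add, Prod.snd_add, Prod.fst_zero, Prod.snd_zero]
    constructor <;> rintro ⟨h1, h2⟩ <;> constructor <;> linarith
  have key3 : ∀ α : ℝ, grel (x, y) ((α, α), 0) ↔ (x.1 - y.1 = α ∧ x.2 - y.2 = α) := by
    intro α
    simp only [grel, Prod.ext_iff, Prod.fst_add, Prod.snd_add, Prod.fst_zero, Prod.snd_zero]
    constructor <;> rintro ⟨h1, h2⟩ <;> constructor <;> linarith
  rcases lt_trichotomy (x.1 - y.1) (x.2 - y.2) with h | h | h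
  · left
    refine ⟨⟨(x.1 - y.1, x.2 - y.2), ⟨h, (key1 _).2 rfl⟩, fun A hA => (key1 A).1 hA.2⟩, ?_, ?_⟩
    · rintro ⟨A, ⟨hlt, hA⟩, -⟩
      rw [key2] at hA; subst hA; simp at hlt; linarith
    · rintro ⟨α, hα, -⟩
      obtain ⟨h1, h2⟩ := (key3 α).1 hα; linarith
  · right; right
    refine ⟨?_, ?_, ⟨x.1 - y.1, (key3 _).2 ⟨rfl, h.symm⟩, fun α hα => ((key3 α).1 hα).1.symm⟩⟩
    · rintro ⟨A, ⟨hlt, hA⟩, -⟩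
      rw [key1] at hA; subst hA; simp at hlt; linarith
    · rintro ⟨A, ⟨hlt, hA⟩, -⟩
      rw [key2] at hA; subst hA; simp at hlt; linarith
  · right; left
    refine ⟨?_, ⟨(y.1 - x.1, y.2 - x.2), ⟨by simpa using by linarith, (key2 _).2 rfl⟩,
        fun A hA => (key2 A).1 hA.2⟩, ?_⟩
    · rintro ⟨A, ⟨hlt, hA⟩, -⟩
      rw [key1] at hA; subst hA; simp at hlt; linarith
    · rintro ⟨α, hα, -⟩
      obtain ⟨h1, h2⟩ := (key3 α).1 hα; linarith
end

section
/- Let ε > 0 and (a, b) ∈ ℝ². The open ball {p ∈ ℝ² : N(p − (a, b)) < ε} for the norm N(u, v) = |v − u| + |u + v|/2 equals the open parallelogram given by the interior of the convex hull of the four points A₁ = (a − ε, b − ε), A₂ = (a + ε/2, b − ε/2), A₃ = (a + ε, b + ε), A₄ = (a − ε/2, b + ε/2). -/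
/-
In the coordinates "centre" `(u + v)/2` and "length" `v - u`, `N` is the `ℓ¹` norm, so it is a
continuous seminorm; hence its open ball is the interior of its closed ball, and the closed ball of
radius `ε` is the cross-polytope spanned by `±ε` times the two coordinate directions, namely
`(ε, ε)` (pure centre) and `(ε/2, -ε/2)` (pure length); centred at `(a, b)` its vertices are
`A₁, …, A₄`.
-/

noncomputable def N (p : ℝ × ℝ) : ℝ := |p.2 - p.1| + |p.1 + p.2| / 2

open Filter Topology

theorem add_smul_add_smul_mem_convexHull {E : Type*} [AddCommGroup E] [Module ℝ E]
    (c u v : E) {x y : ℝ} (h : |x| + |y| ≤ 1) :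
    c + x • u + y • v ∈ convexHull ℝ {c - u, c + v, c + u, c - v} := by
  -- the slack `1 - |x| - |y|` is spread evenly over the four vertices
  set s := 1 - (|x| + |y|)
  have hs : 0 ≤ s := by linarith
  let w : Fin 4 → ℝ := ![x⁻ + s / 4, y⁺ + s / 4, x⁺ + s / 4, y⁻ + s / 4]
  let z : Fin 4 → E := ![c - u, c + v, c + u, c - v]
  have hw_nonneg : ∀ i ∈ Finset.univ, 0 ≤ w i := by
    intro i _
    fin_cases i <;> simp [w] <;> positivity
  have hw_total : x⁻ + s / 4 + (y⁺ + s / 4) + (x⁺ + s / 4) + (y⁻ + s / 4) = 1 := by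
    linarith [posPart_add_negPart x, posPart_add_negPart y]
  have hw_sum : ∑ i, w i = 1 := by simpa [w, Fin.sum_univ_four] using hw_total
  have hz : ∀ i ∈ Finset.univ, z i ∈ convexHull ℝ {c - u, c + v, c + u, c - v} := by
    intro i _
    apply subset_convexHull
    fin_cases i <;> simp [z]
  convert (convex_convexHull ℝ _).sum_mem hw_nonneg hw_sum hz using 1
  simp only [Fin.sum_univ_four, w, z, Matrix.cons_val]
  linear_combination (norm := module)
    (-hw_total) • c - (posPart_sub_negPart x) • u - (posPart_sub_negPart y) • v

namespace Seminorm

variable {E : Type*} [AddCommGroup E] [Module ℝ E]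

theorem convexHull_parallelogram_subset_closedBall (p : Seminorm ℝ E) (c u v : E) {r : ℝ}
    (hu : p u ≤ r) (hv : p v ≤ r) :
    convexHull ℝ {c - u, c + v, c + u, c - v} ⊆ p.closedBall c r := by
  refine convexHull_min ?_ (p.convex_closedBall c r)
  simp only [Set.insert_subset_iff, Set.singleton_subset_iff, mem_closedBall,
    sub_sub_cancel_left, add_sub_cancel_left, map_neg_eq_map]
  exact ⟨hu, hv, hu, hv⟩

variable [TopologicalSpace E] [IsTopologicalAddGroup E] [ContinuousSMul ℝ E]

theorem interior_closedBall_of_continuous (p : Seminorm ℝ E) (hp : Continuous p) (x : E)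
    {r : ℝ} (hr : 0 < r) : interior (p.closedBall x r) = p.ball x r := by
  refine subset_antisymm (fun y hy => ?_) (interior_maximal (p.ball_subset_closedBall x r) ?_)
  · -- push `y` slightly further away from `x` along the ray through it
    have hray : Continuous fun t : ℝ => x + t • (y - x) := by fun_prop
    have hnear : ∀ᶠ t in 𝓝[>] (1 : ℝ), x + t • (y - x) ∈ p.closedBall x r :=
      nhdsWithin_le_nhds <| hray.continuousAt.preimage_mem_nhds <| by
        simpa using mem_interior_iff_mem_nhds.mp hy
    obtain ⟨t, ht_mem, ht⟩ := (hnear.and self_mem_nhdsWithin).exists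
    rw [mem_closedBall, add_sub_cancel_left, map_smul_eq_mul, Real.norm_eq_abs,
      abs_of_pos (one_pos.trans ht)] at ht_mem
    rw [mem_ball]
    by_contra! h
    nlinarith
  · exact isOpen_lt (hp.comp (continuous_id.sub continuous_const)) continuous_const

end Seminorm

theorem continuous_N : Continuous N := by
  unfold N
  fun_prop

theorem N_add_le (p q : ℝ × ℝ) : N (p + q) ≤ N p + N q := by
  simp only [N, Prod.fst_add, Prod.snd_add]
  rw [add_sub_add_comm, add_add_add_comm]
  linarith [abs_add_le (p.2 - p.1) (q.2 - q.1), abs_add_le (p.1 + p.2) (q.1 + q.2)]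

theorem N_smul (t : ℝ) (p : ℝ × ℝ) : N (t • p) = ‖t‖ * N p := by
  simp only [N, Prod.smul_fst, Prod.smul_snd, smul_eq_mul, Real.norm_eq_abs, ← mul_sub,
    ← mul_add, abs_mul]
  ring

noncomputable def intervalSeminorm : Seminorm ℝ (ℝ × ℝ) := .of N N_add_le N_smul

theorem intervalSeminorm_apply (p : ℝ × ℝ) : intervalSeminorm p = N p := rfl

theorem intervalSeminorm_closedBall_eq_convexHull (a b : ℝ) {ε : ℝ} (hε : 0 < ε) :
    intervalSeminorm.closedBall (a, b) ε = convexHull ℝ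
      {(a - ε, b - ε), (a + ε / 2, b - ε / 2), (a + ε, b + ε), (a - ε / 2, b + ε / 2)} := by
  have hvertices : ({(a - ε, b - ε), (a + ε / 2, b - ε / 2), (a + ε, b + ε),
      (a - ε / 2, b + ε / 2)} : Set (ℝ × ℝ)) = {(a, b) - (ε, ε), (a, b) + (ε / 2, -(ε / 2)),
        (a, b) + (ε, ε), (a, b) - (ε / 2, -(ε / 2))} := by
    simp only [Prod.mk_sub_mk, Prod.mk_add_mk, sub_neg_eq_add, ← sub_eq_add_neg]
  rw [hvertices]
  refine subset_antisymm (fun p hp => ?_)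
    (intervalSeminorm.convexHull_parallelogram_subset_closedBall _ _ _ ?_ ?_)
  · simp only [Seminorm.mem_closedBall, intervalSeminorm_apply, N, Prod.fst_sub,
      Prod.snd_sub] at hp
    have hcoords : p = (a, b) + ((p.1 - a + (p.2 - b)) / 2 / ε) • (ε, ε)
        + ((p.1 - a - (p.2 - b)) / ε) • (ε / 2, -(ε / 2)) := by
      ext <;> simp only [Prod.fst_add, Prod.snd_add, Prod.smul_mk, smul_eq_mul] <;>
        field_simp <;> ring
    rw [hcoords]
    apply add_smul_add_smul_mem_convexHull
    rw [abs_div, abs_div, abs_div, abs_of_pos hε, abs_two, abs_sub_comm,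
      show ∀ s l : ℝ, s / 2 / ε + l / ε = (l + s / 2) / ε by intros; ring, div_le_one hε]
    exact hp
  · norm_num [intervalSeminorm_apply, N, abs_of_pos hε, ← two_mul]
  · norm_num [intervalSeminorm_apply, N, abs_of_pos hε, ← neg_add', add_halves]

/-- The open ball of radius `ε` around `(a, b)` for the norm `N` equals the open
parallelogram given by the interior of the convex hull of the four points
`A₁ = (a − ε, b − ε)`, `A₂ = (a + ε/2, b − ε/2)`, `A₃ = (a + ε, b + ε)`,
`A₄ = (a − ε/2, b + ε/2)`. -/
theorem stmt5 (ε : ℝ) (hε : 0 < ε) (a b : ℝ) :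
    {p : ℝ × ℝ | N (p - (a, b)) < ε} =
      interior (convexHull ℝ
        ({(a - ε, b - ε), (a + ε / 2, b - ε / 2), (a + ε, b + ε), (a - ε / 2, b + ε / 2)} :
          Set (ℝ × ℝ))) := by
  rw [← intervalSeminorm_closedBall_eq_convexHull a b hε,
    intervalSeminorm.interior_closedBall_of_continuous continuous_N _ hε]
  rfl
end

section
/- For all reals x₁ ≤ x₂ and y₁ ≤ y₂, let p = min{x₁y₁, x₁y₂, x₂y₁, x₂y₂} and q = max{x₁y₁, x₁y₂, x₂y₁, x₂y₂}. Then N(p, q) ≤ N(x₁, x₂) · N(y₁, y₂), i.e. the norm of the product interval is at most the product of the norms: (q − p) + |p + q|/2 ≤ ((x₂ − x₁) + |x₁ + x₂|/2) · ((y₂ − y₁) + |y₁ + y₂|/2). -/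
set_option maxHeartbeats 1600000 in
lemma stmt6_aux (x₁ x₂ y₁ y₂ s my : ℝ) (hx : x₁ ≤ x₂) (hy : y₁ ≤ y₂)
    (ha1 : x₁ + x₂ ≤ 2 * s) (ha2 : -(x₁ + x₂) ≤ 2 * s)
    (hy1a : -y₁ ≤ my) (hy1b : y₁ ≤ my) (hy2a : -y₂ ≤ my) (hy2b : y₂ ≤ my) :
    max (max (x₁ * y₁) (x₁ * y₂)) (max (x₂ * y₁) (x₂ * y₂)) -
      min (min (x₁ * y₁) (x₁ * y₂)) (min (x₂ * y₁) (x₂ * y₂)) ≤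
    s * (y₂ - y₁) + (x₂ - x₁) * my := by
  rcases max_choice (max (x₁ * y₁) (x₁ * y₂)) (max (x₂ * y₁) (x₂ * y₂)) with h1 | h1 <;>
  rcases max_choice (x₁ * y₁) (x₁ * y₂) with h2 | h2 <;>
  rcases max_choice (x₂ * y₁) (x₂ * y₂) with h3 | h3 <;>
  rcases min_choice (min (x₁ * y₁) (x₁ * y₂)) (min (x₂ * y₁) (x₂ * y₂)) with h4 | h4 <;>
  rcases min_choice (x₁ * y₁) (x₁ * y₂) with h5 | h5 <;>
  rcases min_choice (x₂ * y₁) (x₂ * y₂) with h6 | h6 <;>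
    simp only [h2, h3, h5, h6] at h1 h4 ⊢ <;>
    rw [h1, h4] <;> nlinarith

/-- Submultiplicativity of the norm `N(u, v) = |v − u| + |u + v|/2` with respect to the
interval product: for intervals `[x₁, x₂]` and `[y₁, y₂]`, if `p` and `q` are the min and
max of the four products of endpoints, then
`(q − p) + |p + q|/2 ≤ ((x₂ − x₁) + |x₁ + x₂|/2) * ((y₂ − y₁) + |y₁ + y₂|/2)`. -/
theorem stmt6 (x₁ x₂ y₁ y₂ : ℝ) (hx : x₁ ≤ x₂) (hy : y₁ ≤ y₂) :
    (max (max (x₁ * y₁) (x₁ * y₂)) (max (x₂ * y₁) (x₂ * y₂)) -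
        min (min (x₁ * y₁) (x₁ * y₂)) (min (x₂ * y₁) (x₂ * y₂))) +
      |min (min (x₁ * y₁) (x₁ * y₂)) (min (x₂ * y₁) (x₂ * y₂)) +
        max (max (x₁ * y₁) (x₁ * y₂)) (max (x₂ * y₁) (x₂ * y₂))| / 2 ≤
    ((x₂ - x₁) + |x₁ + x₂| / 2) * ((y₂ - y₁) + |y₁ + y₂| / 2) := by
  set p := min (min (x₁ * y₁) (x₁ * y₂)) (min (x₂ * y₁) (x₂ * y₂)) with hpdef
  set q := max (max (x₁ * y₁) (x₁ * y₂)) (max (x₂ * y₁) (x₂ * y₂)) with hqdef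
  set mx := max |x₁| |x₂| with hmxdef
  set my := max |y₁| |y₂| with hmydef
  have hx1 : |x₁| ≤ mx := le_max_left _ _
  have hx2 : |x₂| ≤ mx := le_max_right _ _
  have hy1 : |y₁| ≤ my := le_max_left _ _
  have hy2 : |y₂| ≤ my := le_max_right _ _
  have hmx0 : 0 ≤ mx := le_trans (abs_nonneg _) hx1
  have hmy0 : 0 ≤ my := le_trans (abs_nonneg _) hy1
  have prodb : ∀ u v : ℝ, |u| ≤ mx → |v| ≤ my → u * v ≤ mx * my ∧ -(mx * my) ≤ u * v := by
    intro u v hu hv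
    have h : |u * v| ≤ mx * my := by
      rw [abs_mul]
      exact mul_le_mul hu hv (abs_nonneg _) hmx0
    exact ⟨le_trans (le_abs_self _) h, by nlinarith [neg_abs_le (u*v)]⟩
  have hq : q ≤ mx * my := by
    apply max_le <;> apply max_le
    · exact (prodb _ _ hx1 hy1).1
    · exact (prodb _ _ hx1 hy2).1
    · exact (prodb _ _ hx2 hy1).1
    · exact (prodb _ _ hx2 hy2).1
  have hp : -(mx * my) ≤ p := by
    apply le_min <;> apply le_min
    · exact (prodb _ _ hx1 hy1).2
    · exact (prodb _ _ hx1 hy2).2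
    · exact (prodb _ _ hx2 hy1).2
    · exact (prodb _ _ hx2 hy2).2
  have ha1 : x₁ + x₂ ≤ 2 * (|x₁ + x₂| / 2) := by
    have := le_abs_self (x₁ + x₂); linarith
  have ha2 : -(x₁ + x₂) ≤ 2 * (|x₁ + x₂| / 2) := by
    have := neg_le_abs (x₁ + x₂); linarith
  have hy1a : -y₁ ≤ my := le_trans (neg_le_abs _) hy1
  have hy1b : y₁ ≤ my := le_trans (le_abs_self _) hy1
  have hy2a : -y₂ ≤ my := le_trans (neg_le_abs _) hy2
  have hy2b : y₂ ≤ my := le_trans (le_abs_self _) hy2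
  have hd : q - p ≤ |x₁ + x₂| / 2 * (y₂ - y₁) + (x₂ - x₁) * my :=
    stmt6_aux x₁ x₂ y₁ y₂ (|x₁ + x₂| / 2) my hx hy ha1 ha2 hy1a hy1b hy2a hy2b
  have hmx : mx ≤ (x₂ - x₁) / 2 + |x₁ + x₂| / 2 := by
    apply max_le <;> rw [abs_le] <;> constructor <;>
      [skip; skip; skip; skip] <;>
      · have h1 := le_abs_self (x₁ + x₂)
        have h2 := neg_le_abs (x₁ + x₂)
        linarith
  have hmy : my ≤ (y₂ - y₁) / 2 + |y₁ + y₂| / 2 := by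
    apply max_le <;> rw [abs_le] <;> constructor <;>
      · have h1 := le_abs_self (y₁ + y₂)
        have h2 := neg_le_abs (y₁ + y₂)
        linarith
  have habs : |p + q| ≤ 2 * (mx * my) - (q - p) :=
    abs_le.mpr ⟨by linarith, by linarith⟩
  have hb0 : 0 ≤ |y₁ + y₂| := abs_nonneg _
  have ha0 : 0 ≤ |x₁ + x₂| := abs_nonneg _
  nlinarith [mul_le_mul hmx hmy hmy0 (by linarith [abs_nonneg (x₁ + x₂)] : (0:ℝ) ≤ (x₂ - x₁) / 2 + |x₁ + x₂| / 2),
    mul_nonneg (sub_nonneg.mpr hx) (sub_nonneg.mpr hy),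
    mul_le_mul_of_nonneg_left hmy (sub_nonneg.mpr hx),
    mul_nonneg (sub_nonneg.mpr hx) hb0, mul_nonneg ha0 hb0]
end

section
/- An element x = (x₁, x₂, x₃, x₄) ∈ ℝ⁴ has a multiplicative inverse for the product m (i.e. there exists y with m(x, y) = (1, 1, 0, 0)) if and only if (x₁² − x₄²)(x₂² − x₃²) ≠ 0; in that case an inverse is given explicitly by y = (x₁/(x₁² − x₄²), x₂/(x₂² − x₃²), −x₃/(x₂² − x₃²), −x₄/(x₁² − x₄²)). -/
def m (x y : ℝ × ℝ × ℝ × ℝ) : ℝ × ℝ × ℝ × ℝ :=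
  (x.1 * y.1 + x.2.2.2 * y.2.2.2,
   x.2.1 * y.2.1 + x.2.2.1 * y.2.2.1,
   x.2.2.1 * y.2.1 + x.2.1 * y.2.2.1,
   x.2.2.2 * y.1 + x.1 * y.2.2.2)

/-- An element `x = (x₁, x₂, x₃, x₄)` of `A₄` is invertible if and only if
`(x₁² − x₄²)(x₂² − x₃²) ≠ 0`, and in that case an inverse is given explicitly by
`(x₁/(x₁² − x₄²), x₂/(x₂² − x₃²), −x₃/(x₂² − x₃²), −x₄/(x₁² − x₄²))`. -/
theorem stmt10 (x : ℝ × ℝ × ℝ × ℝ) :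
    ((∃ y : ℝ × ℝ × ℝ × ℝ, m x y = ((1 : ℝ), (1 : ℝ), (0 : ℝ), (0 : ℝ))) ↔
      (x.1 ^ 2 - x.2.2.2 ^ 2) * (x.2.1 ^ 2 - x.2.2.1 ^ 2) ≠ 0) ∧
    ((x.1 ^ 2 - x.2.2.2 ^ 2) * (x.2.1 ^ 2 - x.2.2.1 ^ 2) ≠ 0 →
      m x (x.1 / (x.1 ^ 2 - x.2.2.2 ^ 2),
           x.2.1 / (x.2.1 ^ 2 - x.2.2.1 ^ 2),
           -x.2.2.1 / (x.2.1 ^ 2 - x.2.2.1 ^ 2),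
           -x.2.2.2 / (x.1 ^ 2 - x.2.2.2 ^ 2)) =
        ((1 : ℝ), (1 : ℝ), (0 : ℝ), (0 : ℝ))) := by
  obtain ⟨a, b, c, d⟩ := x
  have key : (a ^ 2 - d ^ 2) * (b ^ 2 - c ^ 2) ≠ 0 →
      m (a, b, c, d) (a / (a ^ 2 - d ^ 2), b / (b ^ 2 - c ^ 2),
        -c / (b ^ 2 - c ^ 2), -d / (a ^ 2 - d ^ 2)) = ((1:ℝ), (1:ℝ), (0:ℝ), (0:ℝ)) := by
    intro h
    have h1 : a ^ 2 - d ^ 2 ≠ 0 := left_ne_zero_of_mul h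
    have h2 : b ^ 2 - c ^ 2 ≠ 0 := right_ne_zero_of_mul h
    simp only [m, Prod.mk.injEq]
    refine ⟨?_, ?_, ?_, ?_⟩ <;> field_simp <;> ring
  refine ⟨⟨?_, fun h => ⟨_, key h⟩⟩, key⟩
  rintro ⟨⟨p, q, r, s⟩, hy⟩
  simp only [m, Prod.mk.injEq] at hy
  obtain ⟨e1, e2, e3, e4⟩ := hy
  dsimp only
  intro h
  rcases mul_eq_zero.1 h with h' | h'
  · have key2 : (1:ℝ) = (a ^ 2 - d ^ 2) * (p ^ 2 - s ^ 2) := by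
      linear_combination (-(a*p + d*s) - 1) * e1 + (d*p + a*s) * e4
    rw [h', zero_mul] at key2
    exact one_ne_zero key2
  · have key2 : (1:ℝ) = (b ^ 2 - c ^ 2) * (q ^ 2 - r ^ 2) := by
      linear_combination (-(b*q + c*r) - 1) * e2 + (c*q + b*r) * e3
    rw [h', zero_mul] at key2
    exact one_ne_zero key2
end

section
/- Monotony of the product: for all intervals X₁, X₂, Z (pairs of reals with first coordinate ≤ second), if φ(X₁) ⪯ φ(X₂) then m(φ(X₁), φ(Z)) ⪯ m(φ(X₂), φ(Z)). -/
/-- The embedding `φ` of the interval `[x₁, x₂]` into `A₄ = ℝ⁴`. -/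
noncomputable def phi (x₁ x₂ : ℝ) : ℝ × ℝ × ℝ × ℝ :=
  if 0 ≤ x₁ then (x₁, x₂, 0, 0)
  else if 0 ≤ x₂ then (0, x₂, -x₁, 0)
  else (0, 0, -x₁, -x₂)

/-- The partial order relation `⪯` on `A₄` defined clause by clause:
`(x₁, x₂, 0, 0) ⪯ (y₁, y₂, 0, 0)` iff `y₁ ≤ x₁` and `x₂ ≤ y₂`;
`(x₁, x₂, 0, 0) ⪯ (0, y₂, y₃, 0)` iff `x₂ ≤ y₂`;
`(0, x₂, x₃, 0) ⪯ (0, y₂, y₃, 0)` iff `x₂ ≤ y₂` and `x₃ ≤ y₃`;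
`(0, 0, x₃, x₄) ⪯ (0, y₂, y₃, 0)` iff `x₃ ≤ y₃`;
`(0, 0, x₃, x₄) ⪯ (0, 0, y₃, y₄)` iff `x₃ ≤ y₃` and `y₄ ≤ x₄`;
and no other pairs are related. -/
def prec (x y : ℝ × ℝ × ℝ × ℝ) : Prop :=
  (∃ x₁ x₂ y₁ y₂ : ℝ, x = (x₁, x₂, 0, 0) ∧ y = (y₁, y₂, 0, 0) ∧ y₁ ≤ x₁ ∧ x₂ ≤ y₂) ∨
  (∃ x₁ x₂ y₂ y₃ : ℝ, x = (x₁, x₂, 0, 0) ∧ y = (0, y₂, y₃, 0) ∧ x₂ ≤ y₂) ∨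
  (∃ x₂ x₃ y₂ y₃ : ℝ, x = (0, x₂, x₃, 0) ∧ y = (0, y₂, y₃, 0) ∧ x₂ ≤ y₂ ∧ x₃ ≤ y₃) ∨
  (∃ x₃ x₄ y₂ y₃ : ℝ, x = (0, 0, x₃, x₄) ∧ y = (0, y₂, y₃, 0) ∧ x₃ ≤ y₃) ∨
  (∃ x₃ x₄ y₃ y₄ : ℝ, x = (0, 0, x₃, x₄) ∧ y = (0, 0, y₃, y₄) ∧ x₃ ≤ y₃ ∧ y₄ ≤ x₄)

/-!
Right multiplication by `φ(Z)` acts, according to the sign pattern of `Z`, as a diagonal scaling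
with nonnegative factors (`0 ≤ Z.1`), as the reversal of coordinates followed by such a scaling
(`Z.2 < 0`), or as a map onto the plane of elements `(0, u, v, 0)` (`Z.1 < 0 ≤ Z.2`). The first
two preserve `⪯` on all of `ℝ⁴`; the third preserves it between `x` and any `y` with nonnegative
coordinates, and every `φ(X)` has nonnegative coordinates.
-/

namespace prec

variable {x₁ x₂ x₃ x₄ y₁ y₂ y₃ y₄ : ℝ}

lemma pos_pos (h₁ : y₁ ≤ x₁) (h₂ : x₂ ≤ y₂) : prec (x₁, x₂, 0, 0) (y₁, y₂, 0, 0) :=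
  Or.inl ⟨_, _, _, _, rfl, rfl, h₁, h₂⟩

lemma pos_mixed (h₂ : x₂ ≤ y₂) : prec (x₁, x₂, 0, 0) (0, y₂, y₃, 0) :=
  Or.inr <| Or.inl ⟨_, _, _, _, rfl, rfl, h₂⟩

lemma mixed_mixed (h₂ : x₂ ≤ y₂) (h₃ : x₃ ≤ y₃) : prec (0, x₂, x₃, 0) (0, y₂, y₃, 0) :=
  Or.inr <| Or.inr <| Or.inl ⟨_, _, _, _, rfl, rfl, h₂, h₃⟩

lemma neg_mixed (h₃ : x₃ ≤ y₃) : prec (0, 0, x₃, x₄) (0, y₂, y₃, 0) :=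
  Or.inr <| Or.inr <| Or.inr <| Or.inl ⟨_, _, _, _, rfl, rfl, h₃⟩

lemma neg_neg (h₃ : x₃ ≤ y₃) (h₄ : y₄ ≤ x₄) : prec (0, 0, x₃, x₄) (0, 0, y₃, y₄) :=
  Or.inr <| Or.inr <| Or.inr <| Or.inr ⟨_, _, _, _, rfl, rfl, h₃, h₄⟩

end prec

lemma m_pos_right (x : ℝ × ℝ × ℝ × ℝ) (p q : ℝ) :
    m x (p, q, 0, 0) = (x.1 * p, x.2.1 * q, x.2.2.1 * q, x.2.2.2 * p) := by
  simp only [m, mul_zero, add_zero]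

lemma m_mixed_right (x : ℝ × ℝ × ℝ × ℝ) (q r : ℝ) :
    m x (0, q, r, 0) = (0, x.2.1 * q + x.2.2.1 * r, x.2.2.1 * q + x.2.1 * r, 0) := by
  simp only [m, mul_zero, add_zero]

lemma m_assoc (x y z : ℝ × ℝ × ℝ × ℝ) : m (m x y) z = m x (m y z) := by
  simp only [m, Prod.mk.injEq]
  refine ⟨?_, ?_, ?_, ?_⟩ <;> ring

lemma phi_nonneg {a b : ℝ} (hab : a ≤ b) : 0 ≤ phi a b := by
  unfold phi
  split_ifs <;> refine ⟨?_, ?_, ?_, ?_⟩ <;> dsimp <;> linarith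

lemma prec_m_pos_right {p q : ℝ} (hp : 0 ≤ p) (hq : 0 ≤ q) {x y : ℝ × ℝ × ℝ × ℝ}
    (h : prec x y) : prec (m x (p, q, 0, 0)) (m y (p, q, 0, 0)) := by
  rcases h with ⟨x₁, x₂, y₁, y₂, rfl, rfl, h₁, h₂⟩ | ⟨x₁, x₂, y₂, y₃, rfl, rfl, h₂⟩ |
    ⟨x₂, x₃, y₂, y₃, rfl, rfl, h₂, h₃⟩ | ⟨x₃, x₄, y₂, y₃, rfl, rfl, h₃⟩ |
    ⟨x₃, x₄, y₃, y₄, rfl, rfl, h₃, h₄⟩ <;> simp only [m_pos_right, zero_mul]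
  · exact prec.pos_pos (by gcongr) (by gcongr)
  · exact prec.pos_mixed (by gcongr)
  · exact prec.mixed_mixed (by gcongr) (by gcongr)
  · exact prec.neg_mixed (by gcongr)
  · exact prec.neg_neg (by gcongr) (by gcongr)

lemma prec_m_reverse {x y : ℝ × ℝ × ℝ × ℝ} (h : prec x y) :
    prec (m x (0, 0, 1, 1)) (m y (0, 0, 1, 1)) := by
  rcases h with ⟨x₁, x₂, y₁, y₂, rfl, rfl, h₁, h₂⟩ | ⟨x₁, x₂, y₂, y₃, rfl, rfl, h₂⟩ |
    ⟨x₂, x₃, y₂, y₃, rfl, rfl, h₂, h₃⟩ | ⟨x₃, x₄, y₂, y₃, rfl, rfl, h₃⟩ |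
    ⟨x₃, x₄, y₃, y₄, rfl, rfl, h₃, h₄⟩ <;> simp only [m, mul_zero, mul_one, add_zero, zero_add]
  · exact prec.neg_neg h₂ h₁
  · exact prec.neg_mixed h₂
  · exact prec.mixed_mixed h₃ h₂
  · exact prec.pos_mixed h₃
  · exact prec.pos_pos h₄ h₃

lemma prec_m_mixed_right {q r : ℝ} (hq : 0 ≤ q) (hr : 0 ≤ r) {x y : ℝ × ℝ × ℝ × ℝ}
    (hy : 0 ≤ y) (h : prec x y) : prec (m x (0, q, r, 0)) (m y (0, q, r, 0)) := by
  obtain ⟨-, hy₂ : 0 ≤ y.2.1, hy₃ : 0 ≤ y.2.2.1, -⟩ := hy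
  rw [m_mixed_right, m_mixed_right]
  refine prec.mixed_mixed ?_ ?_ <;>
  rcases h with ⟨_, _, _, _, rfl, rfl, h₁, h₂⟩ | ⟨_, _, _, _, rfl, rfl, h₂⟩ |
    ⟨_, _, _, _, rfl, rfl, h₂, h₃⟩ | ⟨_, _, _, _, rfl, rfl, h₃⟩ |
    ⟨_, _, _, _, rfl, rfl, h₃, h₄⟩ <;> dsimp only at * <;> nlinarith

lemma prec_m_phi_right {x y : ℝ × ℝ × ℝ × ℝ} {a b : ℝ} (hab : a ≤ b) (hy : 0 ≤ y)
    (h : prec x y) : prec (m x (phi a b)) (m y (phi a b)) := by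
  unfold phi
  split_ifs with ha hb
  · exact prec_m_pos_right ha (ha.trans hab) h
  · exact prec_m_mixed_right hb (by linarith) hy h
  · -- right multiplication by (0, 0, 1, 1) reverses the coordinates
    have hs : (0, 0, -a, -b) = m (0, 0, 1, 1) (-b, -a, 0, 0) := by simp [m]
    rw [hs, ← m_assoc, ← m_assoc]
    exact prec_m_pos_right (by linarith) (by linarith) (prec_m_reverse h)

theorem stmt13_general (X₁ X₂ Z : ℝ × ℝ) (h₂ : X₂.1 ≤ X₂.2)
    (hZ : Z.1 ≤ Z.2) (h : prec (phi X₁.1 X₁.2) (phi X₂.1 X₂.2)) :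
    prec (m (phi X₁.1 X₁.2) (phi Z.1 Z.2)) (m (phi X₂.1 X₂.2) (phi Z.1 Z.2)) :=
  prec_m_phi_right hZ (phi_nonneg h₂) h

/-- Monotony of the product: for all intervals `X₁, X₂, Z`, if `φ(X₁) ⪯ φ(X₂)` then
`m(φ(X₁), φ(Z)) ⪯ m(φ(X₂), φ(Z))`. -/
theorem stmt13 (X₁ X₂ Z : ℝ × ℝ) (h₁ : X₁.1 ≤ X₁.2) (h₂ : X₂.1 ≤ X₂.2)
    (hZ : Z.1 ≤ Z.2) (h : prec (phi X₁.1 X₁.2) (phi X₂.1 X₂.2)) :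
    prec (m (phi X₁.1 X₁.2) (phi Z.1 Z.2)) (m (phi X₂.1 X₂.2) (phi Z.1 Z.2)) :=
  stmt13_general X₁ X₂ Z h₂ hZ h
end

section
/- Euclidean division of positive intervals: let 0 < x₁ < x₂ and 0 < y₁ < y₂ with x₁y₂ < x₂y₁ (equivalently x₁/x₂ < y₁/y₂). Consider the set S of triples (z₁, z₂, r) ∈ ℝ³ with 0 < z₁ ≤ z₂, r ≥ 0, y₁ = x₁z₁ + r and y₂ = x₂z₂ + r. Then S is nonempty, every (z₁, z₂, r) ∈ S satisfies r ≥ (x₂y₁ − x₁y₂)/(x₂ − x₁), and the minimum value r = (x₂y₁ − x₁y₂)/(x₂ − x₁) is attained exactly at the unique point z₁ = z₂ = (y₂ − y₁)/(x₂ − x₁) of S. -/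
/-- Euclidean division of positive intervals: let `0 < x₁ < x₂` and `0 < y₁ < y₂` with
`x₁y₂ < x₂y₁`. Consider the set `S` of triples `(z₁, z₂, r)` with `0 < z₁ ≤ z₂`, `r ≥ 0`,
`y₁ = x₁z₁ + r` and `y₂ = x₂z₂ + r`. Then `S` is nonempty, every element of `S` has
`r ≥ (x₂y₁ − x₁y₂)/(x₂ − x₁)`, and the minimal value `r = (x₂y₁ − x₁y₂)/(x₂ − x₁)` is
attained exactly at the unique point of `S` with `z₁ = z₂ = (y₂ − y₁)/(x₂ − x₁)`. -/
theorem stmt17 (x₁ x₂ y₁ y₂ : ℝ) (hx₁ : 0 < x₁) (hx : x₁ < x₂)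
    (hy₁ : 0 < y₁) (hy : y₁ < y₂) (h : x₁ * y₂ < x₂ * y₁) :
    letI S : Set (ℝ × ℝ × ℝ) :=
      {p | 0 < p.1 ∧ p.1 ≤ p.2.1 ∧ 0 ≤ p.2.2 ∧
           y₁ = x₁ * p.1 + p.2.2 ∧ y₂ = x₂ * p.2.1 + p.2.2}
    S.Nonempty ∧
    (∀ p ∈ S, (x₂ * y₁ - x₁ * y₂) / (x₂ - x₁) ≤ p.2.2) ∧
    (((y₂ - y₁) / (x₂ - x₁), (y₂ - y₁) / (x₂ - x₁),
        (x₂ * y₁ - x₁ * y₂) / (x₂ - x₁)) ∈ S) ∧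
    (∀ p ∈ S, p.2.2 = (x₂ * y₁ - x₁ * y₂) / (x₂ - x₁) →
      p.1 = (y₂ - y₁) / (x₂ - x₁) ∧ p.2.1 = (y₂ - y₁) / (x₂ - x₁)) := by
  set S : Set (ℝ × ℝ × ℝ) := {p | 0 < p.1 ∧ p.1 ≤ p.2.1 ∧ 0 ≤ p.2.2 ∧ y₁ = x₁ * p.1 + p.2.2 ∧ y₂ = x₂ * p.2.1 + p.2.2} with hS
  have hd : (0:ℝ) < x₂ - x₁ := by linarith
  have hmem : ((y₂ - y₁) / (x₂ - x₁), (y₂ - y₁) / (x₂ - x₁),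
      (x₂ * y₁ - x₁ * y₂) / (x₂ - x₁)) ∈ S := by
    refine ⟨div_pos (by linarith) hd, le_refl _, div_nonneg (by linarith) hd.le, ?_, ?_⟩ <;>
      field_simp <;> ring
  have hlb : ∀ p ∈ S, (x₂ * y₁ - x₁ * y₂) / (x₂ - x₁) ≤ p.2.2 := by
    rintro ⟨z₁, z₂, r⟩ ⟨hz₁, hz, hr, e₁, e₂⟩
    rw [div_le_iff₀ hd]
    nlinarith [mul_pos hx₁ (lt_trans hx₁ hx)]
  refine ⟨⟨_, hmem⟩, hlb, hmem, ?_⟩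
  rintro ⟨z₁, z₂, r⟩ ⟨hz₁, hz, hr, e₁, e₂⟩ hreq
  simp only at hreq ⊢
  have hz12 : z₁ = z₂ := by
    have : (x₂ * y₁ - x₁ * y₂) = r * (x₂ - x₁) := by
      rw [hreq] at *; field_simp
    nlinarith [mul_pos hx₁ (lt_trans hx₁ hx)]
  constructor
  · rw [eq_div_iff hd.ne']; nlinarith
  · rw [eq_div_iff hd.ne']; nlinarith
end

section
/- The interval-square function Q : ℝ² → ℝ², defined by Q(a, b) = (0, max(a², b²)) if a·b ≤ 0 and Q(a, b) = (min(a², b²), max(a², b²)) if a·b > 0, is not differentiable: for every c > 0, Q is not Fréchet differentiable at the point (−c, c) (there is no ℝ-linear map L : ℝ² → ℝ² with ‖Q(p) − Q((−c, c)) − L(p − (−c, c))‖ = o(‖p − (−c, c)‖)). -/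
/-- The interval-square function in coordinates: `Q(a, b) = (0, max(a², b²))` if
`a·b ≤ 0` and `Q(a, b) = (min(a², b²), max(a², b²))` if `a·b > 0`. -/
noncomputable def Q (p : ℝ × ℝ) : ℝ × ℝ :=
  if p.1 * p.2 ≤ 0 then (0, max (p.1 ^ 2) (p.2 ^ 2))
  else (min (p.1 ^ 2) (p.2 ^ 2), max (p.1 ^ 2) (p.2 ^ 2))

/-- The interval-square function `Q` is not differentiable: for every `c > 0`, `Q` is not
Fréchet differentiable at the point `(−c, c)` (there is no `ℝ`-linear map `L : ℝ² → ℝ²`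
with `‖Q(p) − Q((−c,c)) − L(p − (−c,c))‖ = o(‖p − (−c,c)‖)`). -/
theorem stmt19 (c : ℝ) (hc : 0 < c) : ¬ DifferentiableAt ℝ Q ((-c, c) : ℝ × ℝ) := by
  intro hd
  -- second coordinate of Q along t ↦ (t, c) is t ↦ max (t^2) (c^2)
  have hφ : DifferentiableAt ℝ (fun t : ℝ => (t, c)) (-c) :=
    differentiableAt_id.prodMk (differentiableAt_const c)
  have h1 : DifferentiableAt ℝ (fun t : ℝ => (Q (t, c)).2) (-c) :=
    (hd.comp (-c) hφ).snd
  have h2 : DifferentiableAt ℝ (fun t : ℝ => max (t ^ 2) (c ^ 2)) (-c) := by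
    have : (fun t : ℝ => (Q (t, c)).2) = fun t : ℝ => max (t ^ 2) (c ^ 2) := by
      funext t
      unfold Q
      split <;> simp
    rwa [this] at h1
  -- hence |t^2 - c^2| is differentiable at -c
  have h3 : DifferentiableAt ℝ (fun t : ℝ => |t ^ 2 - c ^ 2|) (-c) := by
    have heq : (fun t : ℝ => |t ^ 2 - c ^ 2|) =
        fun t : ℝ => 2 * max (t ^ 2) (c ^ 2) - t ^ 2 - c ^ 2 := by
      funext t
      rcases le_total (t ^ 2) (c ^ 2) with h | h
      · rw [max_eq_right h, abs_of_nonpos (by linarith)]; ring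
      · rw [max_eq_left h, abs_of_nonneg (by linarith)]; ring
    rw [heq]
    exact ((h2.const_mul 2).sub (differentiableAt_pow 2)).sub (differentiableAt_const _)
  -- hence |t + c| is differentiable at -c
  have h4 : DifferentiableAt ℝ (fun t : ℝ => |t + c|) (-c) := by
    have hden : (fun t : ℝ => c - t) (-c) ≠ 0 := by simp; linarith
    have h5 : DifferentiableAt ℝ (fun t : ℝ => |t ^ 2 - c ^ 2| / (c - t)) (-c) :=
      h3.div ((differentiableAt_const c).sub differentiableAt_id) hden
    apply h5.congr_of_eventuallyEq
    have hmem : Set.Iio c ∈ nhds (-c) := Iio_mem_nhds (by linarith)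
    filter_upwards [hmem] with t ht
    have : t ^ 2 - c ^ 2 = (t + c) * (t - c) := by ring
    rw [this, abs_mul, abs_of_neg (by simpa using ht : t - c < 0),
      mul_div_assoc, show -(t - c) = c - t from by ring,
      div_self (by simp at ht ⊢; linarith : c - t ≠ 0), mul_one]
  -- translate to get abs differentiable at 0, contradiction
  have h6 : DifferentiableAt ℝ (abs : ℝ → ℝ) 0 := by
    have hψ : DifferentiableAt ℝ (fun s : ℝ => s - c) 0 :=
      differentiableAt_id.sub (differentiableAt_const c)
    have := DifferentiableAt.comp 0 (by simpa using h4) hψ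
    have heq : ((fun t : ℝ => |t + c|) ∘ fun s : ℝ => s - c) = (abs : ℝ → ℝ) := by
      funext s; simp [Function.comp]
    rwa [heq] at this
  exact not_differentiableAt_abs_zero h6
end
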